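/- arXiv:1710.06962 — 2 statements merged into one kernel-verified Lean document; each statement's English description precedes it below -/
import Mathlib

section
/- Let F be a CM number field with maximal totally real subfield F₀, nontrivial F₀-automorphism σ, and Nm(z) := z·σ(z). Let J♭ be an invertible hermitian (n−1)×(n−1) matrix over F, let c₀ ∈ F₀^× and let J := diag(J♭, c₀) be the n × n block-diagonal hermitian matrix (corresponding to an orthogonal decomposition W = W♭ ⊕ F·u with (u,u) = c₀). Define H := {h ∈ GL_{n−1}(F) | hᴴ J♭ h = J♭}, G := {g ∈ GL_n(F) | gᴴ J g = J}, the similitude groups H^ℚ := {h | hᴴ J♭ h = c(h)·J♭, c(h) ∈ ℚ^×} and G^ℚ := {g | gᴴ J g = c(g)·J, c(g) ∈ ℚ^×}, Z^ℚ := {z ∈ F^× | Nm(z) ∈ ℚ^×}, and the fiber products H̃ := {(z, h) ∈ Z^ℚ × H^ℚ | Nm(z) = c(h)} and G̃ := {(z, g) ∈ Z^ℚ × G^ℚ | Nm(z) = c(g)}. Then: (i) (z, h) ↦ (z, diag(h, z)) is an injective group homomorphism H̃ → G̃, and h ↦ diag(h, 1) is an injective group homomorphism H → G; (ii) the map (z,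 g) ↦ z^{−1}g induces a bijection of left coset spaces G̃/H̃ ≅ G/H; (iii) setting G̃_W := {(z, h, g) ∈ Z^ℚ × H^ℚ × G^ℚ | Nm(z) = c(h) = c(g)} with H̃ embedded via (z, h) ↦ (z, h, diag(h, z)), the map (z, h, g) ↦ (z^{−1}h, z^{−1}g) induces a bijection of double coset spaces H̃\G̃_W/H̃ ≅ H\(H × G)/H, where H is embedded in H × G via h ↦ (h, diag(h, 1)). (This is Lemma 2.2 of the paper at the level of rational points.) -/
open Matrix

/-- The σ-conjugate transpose of a matrix. -/
def conjTr {F : Type*} [Field F] {ι : Type*} (σ : F → F) (g : Matrix ι ι F) :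
    Matrix ι ι F :=
  (g.map σ)ᵀ

/-- `diag(h, z)`: the `(m+1) × (m+1)` block diagonal matrix with blocks `h` and `z`. -/
def diagBlock {F : Type*} [Field F] {m : ℕ} (h : Matrix (Fin m) (Fin m) F) (z : F) :
    Matrix (Fin m ⊕ Unit) (Fin m ⊕ Unit) F :=
  Matrix.fromBlocks h 0 0 (Matrix.of fun _ _ => z)

/-- The rational points of `Z^ℚ`: elements of `F^×` whose norm `z * σ z` lies in `ℚ^×`. -/
def ZQPoints {F : Type*} [Field F] (σ : F → F) : Set F :=
  {z | z ≠ 0 ∧ ∃ q : ℚ, q ≠ 0 ∧ z * σ z = (q : F)}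

/-- The unitary group of the hermitian matrix `J`. -/
def UnitaryPoints {F : Type*} [Field F] {ι : Type*} [Fintype ι] (σ : F → F)
    (J : Matrix ι ι F) : Set (Matrix ι ι F) :=
  {g | conjTr σ g * J * g = J}

/-- The unitary similitude group of `J` with rational similitude factor. -/
def GUQPoints {F : Type*} [Field F] {ι : Type*} [Fintype ι] (σ : F → F)
    (J : Matrix ι ι F) : Set (Matrix ι ι F) :=
  {g | ∃ c : ℚ, c ≠ 0 ∧ conjTr σ g * J * g = (c : F) • J}

/-- The fiber product `Z^ℚ ×_{𝔾_m} GU(J)^ℚ` (this is `H̃` for `J = J♭`, resp. `G̃` for `J`):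
pairs `(z, g)` with `z ∈ Z^ℚ`, `g` a rational similitude of `J`, and `Nm z = c(g)`. -/
def TildePoints {F : Type*} [Field F] {ι : Type*} [Fintype ι] (σ : F → F)
    (J : Matrix ι ι F) : Set (F × Matrix ι ι F) :=
  {p | p.1 ≠ 0 ∧ ∃ c : ℚ, c ≠ 0 ∧ p.1 * σ p.1 = (c : F) ∧
    conjTr σ p.2 * J * p.2 = (c : F) • J}

/-- `G̃_W = Z^ℚ ×_{𝔾_m} H^ℚ ×_{𝔾_m} G^ℚ`: triples `(z, h, g)` with `z ∈ Z^ℚ` and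
`Nm z = c(h) = c(g)`. -/
def TildeHGPoints {F : Type*} [Field F] {m : ℕ} (σ : F → F)
    (Jb : Matrix (Fin m) (Fin m) F) (J : Matrix (Fin m ⊕ Unit) (Fin m ⊕ Unit) F) :
    Set (F × Matrix (Fin m) (Fin m) F × Matrix (Fin m ⊕ Unit) (Fin m ⊕ Unit) F) :=
  {p | p.1 ≠ 0 ∧ ∃ c : ℚ, c ≠ 0 ∧ p.1 * σ p.1 = (c : F) ∧
    conjTr σ p.2.1 * Jb * p.2.1 = (c : F) • Jb ∧
    conjTr σ p.2.2 * J * p.2.2 = (c : F) • J}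

/-- The embedding `H̃ → G̃`, `(z, h) ↦ (z, diag(h, z))`. -/
def embTilde {F : Type*} [Field F] {m : ℕ} (p : F × Matrix (Fin m) (Fin m) F) :
    F × Matrix (Fin m ⊕ Unit) (Fin m ⊕ Unit) F :=
  (p.1, diagBlock p.2 p.1)

/-- The embedding `H → G`, `h ↦ diag(h, 1)`. -/
def embU {F : Type*} [Field F] {m : ℕ} (h : Matrix (Fin m) (Fin m) F) :
    Matrix (Fin m ⊕ Unit) (Fin m ⊕ Unit) F :=
  diagBlock h 1

/-- The embedding `H̃ → G̃_W`, `(z, h) ↦ (z, h, diag(h, z))`. -/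
def embTildeHG {F : Type*} [Field F] {m : ℕ} (p : F × Matrix (Fin m) (Fin m) F) :
    F × Matrix (Fin m) (Fin m) F × Matrix (Fin m ⊕ Unit) (Fin m ⊕ Unit) F :=
  (p.1, p.2, diagBlock p.2 p.1)

/-- The projection `G̃ → G`, `(z, g) ↦ z⁻¹ • g` (cf. Lemma 2.2 of the paper). -/
def projU {F : Type*} [Field F] {ι : Type*} (p : F × Matrix ι ι F) : Matrix ι ι F :=
  p.1⁻¹ • p.2

/-- The projection `G̃_W → H × G`, `(z, h, g) ↦ (z⁻¹ • h, z⁻¹ • g)`. -/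
def projHG {F : Type*} [Field F] {m : ℕ}
    (p : F × Matrix (Fin m) (Fin m) F × Matrix (Fin m ⊕ Unit) (Fin m ⊕ Unit) F) :
    Matrix (Fin m) (Fin m) F × Matrix (Fin m ⊕ Unit) (Fin m ⊕ Unit) F :=
  (p.1⁻¹ • p.2.1, p.1⁻¹ • p.2.2)

/-- The embedding `H → H × G`, `h ↦ (h, diag(h, 1))`. -/
def embHtoHG {F : Type*} [Field F] {m : ℕ} (h : Matrix (Fin m) (Fin m) F) :
    Matrix (Fin m) (Fin m) F × Matrix (Fin m ⊕ Unit) (Fin m ⊕ Unit) F :=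
  (h, diagBlock h 1)

/-!
Dividing by `z` turns a similitude with factor `Nm z` into an isometry, so `(z, g) ↦ z⁻¹ g`
maps `G̃` onto `G` (an isometry `g` lifts to `(1, g)`), multiplicatively, and it intertwines
`(z, h) ↦ (z, diag(h, z))` with `h ↦ diag(h, 1)`. Conversely, if `z'⁻¹ g' = z⁻¹ g · diag(h, 1)`
with `h ∈ H`, then `(z', g') = (z, g) · (w, diag(w h, w))` for `w = z' / z`, and `(w, w h) ∈ H̃`
because `Nm w = Nm z' / Nm z` is rational. The double cosets are handled in the same way, with
`w = z' / z` on the left and `w = 1` on the right.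
-/

section Conj

variable {F : Type*} [Field F] {R : Type*} [FunLike R F F] [RingHomClass R F F] (σ : R)

theorem conjTr_smul {ι : Type*} (a : F) (A : Matrix ι ι F) :
    conjTr σ (a • A) = σ a • conjTr σ A := by
  ext i j
  simp [conjTr]

theorem conjTr_diagBlock {m : ℕ} (h : Matrix (Fin m) (Fin m) F) (z : F) :
    conjTr σ (diagBlock h z) = diagBlock (conjTr σ h) (σ z) := by
  ext (i | i) (j | j) <;> simp [conjTr, diagBlock]

theorem conjTr_smul_mul_mul_smul {ι : Type*} [Fintype ι] (J A : Matrix ι ι F) (w : F) :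
    conjTr σ (w • A) * J * (w • A) = (w * σ w) • (conjTr σ A * J * A) := by
  rw [conjTr_smul, smul_mul_assoc, smul_mul_assoc, mul_smul_comm, smul_smul, mul_comm]

end Conj

section DiagBlock

variable {F : Type*} [Field F] {m : ℕ}

theorem diagBlock_mul (h h' : Matrix (Fin m) (Fin m) F) (z z' : F) :
    diagBlock h z * diagBlock h' z' = diagBlock (h * h') (z * z') := by
  ext (i | i) (j | j) <;> simp [diagBlock, Matrix.mul_apply, Fintype.sum_sum_type]

theorem smul_diagBlock (a : F) (h : Matrix (Fin m) (Fin m) F) (z : F) :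
    a • diagBlock h z = diagBlock (a • h) (a * z) := by
  ext (i | i) (j | j) <;> simp [diagBlock]

theorem eq_of_diagBlock_eq {h h' : Matrix (Fin m) (Fin m) F} {z z' : F}
    (H : diagBlock h z = diagBlock h' z') : h = h' :=
  (Matrix.fromBlocks_inj.1 H).1

theorem embTilde_mul (p q : F × Matrix (Fin m) (Fin m) F) :
    embTilde (p * q) = embTilde p * embTilde q :=
  Prod.ext rfl (diagBlock_mul _ _ _ _).symm

theorem embU_mul (h h' : Matrix (Fin m) (Fin m) F) : embU (h * h') = embU h * embU h' := by
  rw [embU, embU, embU, diagBlock_mul, mul_one]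

theorem embTilde_injective : Function.Injective (embTilde : F × Matrix (Fin m) (Fin m) F → _) :=
  fun _ _ H => Prod.ext (Prod.ext_iff.1 H).1 (eq_of_diagBlock_eq (Prod.ext_iff.1 H).2)

theorem embU_injective : Function.Injective (embU : Matrix (Fin m) (Fin m) F → _) :=
  fun _ _ => eq_of_diagBlock_eq

end DiagBlock

theorem mem_ZQPoints_of_mem_tildePoints {F : Type*} [Field F] {σ : F → F} {ι : Type*}
    [Fintype ι] {J : Matrix ι ι F} {p : F × Matrix ι ι F} (hp : p ∈ TildePoints σ J) :
    p.1 ∈ ZQPoints σ :=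
  let ⟨hz, c, hc, hnorm, _⟩ := hp
  ⟨hz, c, hc, hnorm⟩

theorem mem_ZQPoints_of_mem_tildeHGPoints {F : Type*} [Field F] {σ : F → F} {m : ℕ}
    {Jb : Matrix (Fin m) (Fin m) F} {J : Matrix (Fin m ⊕ Unit) (Fin m ⊕ Unit) F}
    {p : F × Matrix (Fin m) (Fin m) F × Matrix (Fin m ⊕ Unit) (Fin m ⊕ Unit) F}
    (hp : p ∈ TildeHGPoints σ Jb J) : p.1 ∈ ZQPoints σ :=
  let ⟨hz, c, hc, hnorm, _⟩ := hp
  ⟨hz, c, hc, hnorm⟩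

section Similitude

variable {F : Type*} [Field F] {R : Type*} [FunLike R F F] [RingHomClass R F F] {σ : R}

theorem diagBlock_similitude {m : ℕ} {Jb h : Matrix (Fin m) (Fin m) F} {z e : F} (c : F)
    (hz : z * σ z = e) (hh : conjTr σ h * Jb * h = e • Jb) :
    conjTr σ (diagBlock h z) * diagBlock Jb c * diagBlock h z = e • diagBlock Jb c := by
  rw [conjTr_diagBlock, diagBlock_mul, diagBlock_mul, smul_diagBlock, hh, ← hz]
  congr 1
  ring

theorem inv_smul_mem_unitaryPoints {ι : Type*} [Fintype ι] {J A : Matrix ι ι F} {z : F}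
    (hz : z ≠ 0) (hA : conjTr σ A * J * A = (z * σ z) • J) :
    z⁻¹ • A ∈ UnitaryPoints σ J := by
  have hσz : σ z ≠ 0 := (map_ne_zero σ).2 hz
  change conjTr σ (z⁻¹ • A) * J * (z⁻¹ • A) = J
  rw [conjTr_smul_mul_mul_smul, hA, smul_smul, map_inv₀,
    show z⁻¹ * (σ z)⁻¹ * (z * σ z) = 1 by field_simp, one_smul]

theorem one_mem_ZQPoints [CharZero F] : (1 : F) ∈ ZQPoints σ :=
  ⟨one_ne_zero, 1, one_ne_zero, by simp⟩

theorem div_mem_ZQPoints [CharZero F] {z z' : F} (hz : z ∈ ZQPoints σ) (hz' : z' ∈ ZQPoints σ) :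
    z' / z ∈ ZQPoints σ := by
  obtain ⟨hz0, c, hc, hnorm⟩ := hz
  obtain ⟨hz0', c', hc', hnorm'⟩ := hz'
  refine ⟨div_ne_zero hz0' hz0, c' / c, div_ne_zero hc' hc, ?_⟩
  rw [map_div₀, Rat.cast_div, ← hnorm, ← hnorm', div_mul_div_comm]

theorem projU_mem_unitaryPoints {ι : Type*} [Fintype ι] {J : Matrix ι ι F}
    {p : F × Matrix ι ι F} (hp : p ∈ TildePoints σ J) : projU p ∈ UnitaryPoints σ J := by
  obtain ⟨hz, c, -, hnorm, hg⟩ := hp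
  exact inv_smul_mem_unitaryPoints hz (hnorm ▸ hg)

theorem smul_mem_tildePoints {ι : Type*} [Fintype ι] {J h : Matrix ι ι F} {w : F}
    (hw : w ∈ ZQPoints σ) (hh : h ∈ UnitaryPoints σ J) : (w, w • h) ∈ TildePoints σ J := by
  obtain ⟨hw0, c, hc, hnorm⟩ := hw
  refine ⟨hw0, c, hc, hnorm, ?_⟩
  rw [conjTr_smul_mul_mul_smul, hh, hnorm]

section Blocks

variable {m : ℕ} {Jb : Matrix (Fin m) (Fin m) F}

theorem embTilde_mem_tildePoints {p : F × Matrix (Fin m) (Fin m) F} (c : F)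
    (hp : p ∈ TildePoints σ Jb) : embTilde p ∈ TildePoints σ (diagBlock Jb c) :=
  let ⟨hz, e, he, hnorm, hh⟩ := hp
  ⟨hz, e, he, hnorm, diagBlock_similitude c hnorm hh⟩

theorem embTildeHG_mem_tildeHGPoints {p : F × Matrix (Fin m) (Fin m) F} (c : F)
    (hp : p ∈ TildePoints σ Jb) : embTildeHG p ∈ TildeHGPoints σ Jb (diagBlock Jb c) :=
  let ⟨hz, e, he, hnorm, hh⟩ := hp
  ⟨hz, e, he, hnorm, hh, diagBlock_similitude c hnorm hh⟩

theorem embU_mem_unitaryPoints {h : Matrix (Fin m) (Fin m) F} (c : F)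
    (hh : h ∈ UnitaryPoints σ Jb) : embU h ∈ UnitaryPoints σ (diagBlock Jb c) := by
  have h1 : conjTr σ h * Jb * h = (1 : F) • Jb := (one_smul F Jb).symm ▸ hh
  have h2 := diagBlock_similitude (σ := σ) c (by rw [map_one, one_mul]) h1
  rwa [one_smul] at h2

theorem projHG_mem_unitaryPoints {J : Matrix (Fin m ⊕ Unit) (Fin m ⊕ Unit) F}
    {p : F × Matrix (Fin m) (Fin m) F × Matrix (Fin m ⊕ Unit) (Fin m ⊕ Unit) F}
    (hp : p ∈ TildeHGPoints σ Jb J) :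
    projHG p ∈ UnitaryPoints σ Jb ×ˢ UnitaryPoints σ J := by
  obtain ⟨hz, c, -, hnorm, hh, hg⟩ := hp
  exact ⟨inv_smul_mem_unitaryPoints hz (hnorm ▸ hh), inv_smul_mem_unitaryPoints hz (hnorm ▸ hg)⟩

theorem smul_mem_tildeHGPoints {J : Matrix (Fin m ⊕ Unit) (Fin m ⊕ Unit) F}
    {h : Matrix (Fin m) (Fin m) F} {g : Matrix (Fin m ⊕ Unit) (Fin m ⊕ Unit) F} {w : F}
    (hw : w ∈ ZQPoints σ) (hh : h ∈ UnitaryPoints σ Jb) (hg : g ∈ UnitaryPoints σ J) :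
    (w, w • h, w • g) ∈ TildeHGPoints σ Jb J := by
  obtain ⟨hw0, c, hc, hnorm⟩ := hw
  refine ⟨hw0, c, hc, hnorm, ?_, ?_⟩
  · rw [conjTr_smul_mul_mul_smul, hh, hnorm]
  · rw [conjTr_smul_mul_mul_smul, hg, hnorm]

end Blocks

end Similitude

section Projection

variable {F : Type*} [Field F]

theorem projU_mul {ι : Type*} [Fintype ι] (p q : F × Matrix ι ι F) :
    projU (p * q) = projU p * projU q := by
  simp only [projU, Prod.fst_mul, Prod.snd_mul, mul_inv, smul_mul_smul_comm]

theorem projU_mk_smul {ι : Type*} {w : F} (hw : w ≠ 0) (h : Matrix ι ι F) :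
    projU (w, w • h) = h :=
  inv_smul_smul₀ hw h

theorem eq_of_projU_eq {ι : Type*} {p p' : F × Matrix ι ι F} (hz : p.1 ≠ 0)
    (h1 : p.1 = p'.1) (h2 : projU p = projU p') : p = p' := by
  obtain ⟨z, g⟩ := p
  obtain ⟨z', g'⟩ := p'
  obtain rfl : z = z' := h1
  exact congrArg _ (smul_right_injective _ (inv_ne_zero hz) h2)

variable {m : ℕ}

theorem projU_embTilde {q : F × Matrix (Fin m) (Fin m) F} (hq : q.1 ≠ 0) :
    projU (embTilde q) = embU (projU q) := by
  rw [projU, embTilde, embU, projU, smul_diagBlock, inv_mul_cancel₀ hq]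

theorem projHG_mul
    (p q : F × Matrix (Fin m) (Fin m) F × Matrix (Fin m ⊕ Unit) (Fin m ⊕ Unit) F) :
    projHG (p * q) = projHG p * projHG q := by
  simp only [projHG, Prod.fst_mul, Prod.snd_mul, mul_inv, smul_mul_smul_comm, Prod.mk_mul_mk]

theorem projHG_embTildeHG {q : F × Matrix (Fin m) (Fin m) F} (hq : q.1 ≠ 0) :
    projHG (embTildeHG q) = embHtoHG (projU q) := by
  rw [projHG, embTildeHG, embHtoHG, projU, smul_diagBlock, inv_mul_cancel₀ hq]

theorem projHG_mk_smul {w : F} (hw : w ≠ 0) (h : Matrix (Fin m) (Fin m) F)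
    (g : Matrix (Fin m ⊕ Unit) (Fin m ⊕ Unit) F) : projHG (w, w • h, w • g) = (h, g) := by
  rw [projHG, inv_smul_smul₀ hw, inv_smul_smul₀ hw]

theorem eq_of_projHG_eq
    {p p' : F × Matrix (Fin m) (Fin m) F × Matrix (Fin m ⊕ Unit) (Fin m ⊕ Unit) F}
    (hz : p.1 ≠ 0) (h1 : p.1 = p'.1) (h2 : projHG p = projHG p') : p = p' := by
  obtain ⟨z, h, g⟩ := p
  obtain ⟨z', h', g'⟩ := p'
  obtain rfl : z = z' := h1
  simp only [projHG, Prod.mk.injEq, smul_right_injective _ (inv_ne_zero hz) |>.eq_iff] at h2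
  rw [h2.1, h2.2]

end Projection

section Cosets

variable {F : Type*} [Field F] [CharZero F] {R : Type*} [FunLike R F F] [RingHomClass R F F]
  {σ : R} {m : ℕ} {Jb : Matrix (Fin m) (Fin m) F}

theorem exists_eq_mul_embTilde_iff {p p' : F × Matrix (Fin m ⊕ Unit) (Fin m ⊕ Unit) F}
    (hz : p.1 ∈ ZQPoints σ) (hz' : p'.1 ∈ ZQPoints σ) :
    (∃ q ∈ TildePoints σ Jb, p' = p * embTilde q) ↔
      ∃ h ∈ UnitaryPoints σ Jb, projU p' = projU p * embU h := by
  constructor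
  · rintro ⟨q, hq, rfl⟩
    exact ⟨projU q, projU_mem_unitaryPoints hq, by rw [projU_mul, projU_embTilde hq.1]⟩
  · rintro ⟨h, hh, hproj⟩
    have hw := div_mem_ZQPoints hz hz'
    refine ⟨(p'.1 / p.1, (p'.1 / p.1) • h), smul_mem_tildePoints hw hh,
      eq_of_projU_eq hz'.1 (mul_div_cancel₀ _ hz.1).symm ?_⟩
    rw [projU_mul, projU_embTilde hw.1, projU_mk_smul hw.1, hproj]

theorem exists_eq_embTildeHG_mul_mul_embTildeHG_iff
    {p p' : F × Matrix (Fin m) (Fin m) F × Matrix (Fin m ⊕ Unit) (Fin m ⊕ Unit) F}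
    (hz : p.1 ∈ ZQPoints σ) (hz' : p'.1 ∈ ZQPoints σ) :
    (∃ q ∈ TildePoints σ Jb, ∃ q' ∈ TildePoints σ Jb, p' = embTildeHG q * p * embTildeHG q') ↔
      ∃ h ∈ UnitaryPoints σ Jb, ∃ h' ∈ UnitaryPoints σ Jb,
        projHG p' = embHtoHG h * projHG p * embHtoHG h' := by
  constructor
  · rintro ⟨q, hq, q', hq', rfl⟩
    refine ⟨projU q, projU_mem_unitaryPoints hq, projU q', projU_mem_unitaryPoints hq', ?_⟩
    rw [projHG_mul, projHG_mul, projHG_embTildeHG hq.1, projHG_embTildeHG hq'.1]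
  · rintro ⟨h, hh, h', hh', hproj⟩
    have hw := div_mem_ZQPoints hz hz'
    have hfst : p'.1 = p'.1 / p.1 * p.1 * 1 := by rw [mul_one, div_mul_cancel₀ _ hz.1]
    refine ⟨(p'.1 / p.1, (p'.1 / p.1) • h), smul_mem_tildePoints hw hh,
      (1, (1 : F) • h'), smul_mem_tildePoints one_mem_ZQPoints hh', eq_of_projHG_eq hz'.1 hfst ?_⟩
    rw [projHG_mul, projHG_mul, projHG_embTildeHG hw.1, projHG_embTildeHG one_ne_zero,
      projU_mk_smul hw.1, projU_mk_smul one_ne_zero, hproj]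

end Cosets

theorem tilde_embeddings_and_coset_matching_general
    (F₀ F : Type*) [Field F₀] [Field F] [Algebra F₀ F]
    [NumberField F]
    -- `σ` is the nontrivial `F₀`-automorphism of `F/F₀` (an involution)
    (σ : F ≃ₐ[F₀] F)
    (m : ℕ) (Jb : Matrix (Fin m) (Fin m) F)
    (c₀ : F₀)
    (J : Matrix (Fin m ⊕ Unit) (Fin m ⊕ Unit) F)
    (hJdef : J = Matrix.fromBlocks Jb 0 0 (Matrix.of fun _ _ => algebraMap F₀ F c₀)) :
    -- (i) injective group homomorphisms `H̃ → G̃` and `H → G`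
    (Set.MapsTo embTilde (TildePoints (⇑σ) Jb) (TildePoints (⇑σ) J) ∧
      Set.InjOn embTilde (TildePoints (⇑σ) Jb) ∧
      (∀ p ∈ TildePoints (⇑σ) Jb, ∀ q ∈ TildePoints (⇑σ) Jb,
        embTilde (p * q) = embTilde p * embTilde q) ∧
      Set.MapsTo embU (UnitaryPoints (⇑σ) Jb) (UnitaryPoints (⇑σ) J) ∧
      Set.InjOn embU (UnitaryPoints (⇑σ) Jb) ∧
      (∀ h ∈ UnitaryPoints (⇑σ) Jb, ∀ h' ∈ UnitaryPoints (⇑σ) Jb,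
        embU (h * h') = embU h * embU h')) ∧
    -- (ii) `(z, g) ↦ z⁻¹ • g` induces a bijection `G̃/H̃ ≅ G/H`
    ((∀ p ∈ TildePoints (⇑σ) J, projU p ∈ UnitaryPoints (⇑σ) J) ∧
      (∀ g ∈ UnitaryPoints (⇑σ) J, ∃ p ∈ TildePoints (⇑σ) J, projU p = g) ∧
      (∀ p ∈ TildePoints (⇑σ) J, ∀ p' ∈ TildePoints (⇑σ) J,
        ((∃ q ∈ TildePoints (⇑σ) Jb, p' = p * embTilde q) ↔
          (∃ h ∈ UnitaryPoints (⇑σ) Jb, projU p' = projU p * embU h)))) ∧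
    -- (iii) `(z, h, g) ↦ (z⁻¹ • h, z⁻¹ • g)` induces a bijection `H̃\G̃_W/H̃ ≅ H\(H×G)/H`
    ((∀ q ∈ TildePoints (⇑σ) Jb, embTildeHG q ∈ TildeHGPoints (⇑σ) Jb J) ∧
      (∀ p ∈ TildeHGPoints (⇑σ) Jb J,
        projHG p ∈ UnitaryPoints (⇑σ) Jb ×ˢ UnitaryPoints (⇑σ) J) ∧
      (∀ x ∈ UnitaryPoints (⇑σ) Jb ×ˢ UnitaryPoints (⇑σ) J,
        ∃ p ∈ TildeHGPoints (⇑σ) Jb J, projHG p = x) ∧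
      (∀ p ∈ TildeHGPoints (⇑σ) Jb J, ∀ p' ∈ TildeHGPoints (⇑σ) Jb J,
        ((∃ q ∈ TildePoints (⇑σ) Jb, ∃ q' ∈ TildePoints (⇑σ) Jb,
            p' = embTildeHG q * p * embTildeHG q') ↔
          (∃ h ∈ UnitaryPoints (⇑σ) Jb, ∃ h' ∈ UnitaryPoints (⇑σ) Jb,
            projHG p' = embHtoHG h * projHG p * embHtoHG h')))) := by
  obtain rfl : J = diagBlock Jb (algebraMap F₀ F c₀) := hJdef
  refine ⟨⟨fun p hp => embTilde_mem_tildePoints _ hp, embTilde_injective.injOn,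
      fun p _ q _ => embTilde_mul p q, fun h hh => embU_mem_unitaryPoints _ hh,
      embU_injective.injOn, fun h _ h' _ => embU_mul h h'⟩,
    ⟨fun p hp => projU_mem_unitaryPoints hp,
      fun g hg => ⟨(1, (1 : F) • g), smul_mem_tildePoints one_mem_ZQPoints hg,
        projU_mk_smul one_ne_zero g⟩,
      fun p hp p' hp' => exists_eq_mul_embTilde_iff (mem_ZQPoints_of_mem_tildePoints hp)
        (mem_ZQPoints_of_mem_tildePoints hp')⟩,
    ⟨fun q hq => embTildeHG_mem_tildeHGPoints _ hq, fun p hp => projHG_mem_unitaryPoints hp,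
      fun x hx => ⟨(1, (1 : F) • x.1, (1 : F) • x.2),
        smul_mem_tildeHGPoints one_mem_ZQPoints hx.1 hx.2, projHG_mk_smul one_ne_zero x.1 x.2⟩,
      fun p hp p' hp' => exists_eq_embTildeHG_mul_mul_embTildeHG_iff
        (mem_ZQPoints_of_mem_tildeHGPoints hp) (mem_ZQPoints_of_mem_tildeHGPoints hp')⟩⟩

/-- Lemma 2.2 of the paper at the level of rational points.
Let `F/F₀` be a CM field with automorphism `σ`, `J♭` an invertible hermitian `m × m`
("`(n-1) × (n-1)`") matrix over `F`, `c₀ ∈ F₀^×` and `J := diag(J♭, c₀)` (corresponding to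
`W = W♭ ⊕ F·u` with `(u, u) = c₀`).  Then:
(i) `(z, h) ↦ (z, diag(h, z))` is an injective group homomorphism `H̃ → G̃` and
`h ↦ diag(h, 1)` is an injective group homomorphism `H → G`;
(ii) `(z, g) ↦ z⁻¹ g` induces a bijection of left coset spaces `G̃/H̃ ≅ G/H`;
(iii) `(z, h, g) ↦ (z⁻¹ h, z⁻¹ g)` induces a bijection of double coset spaces
`H̃\G̃_W/H̃ ≅ H\(H × G)/H`, where `H̃` is embedded in `G̃_W` via `(z, h) ↦ (z, h, diag(h, z))`
and `H` is embedded in `H × G` via `h ↦ (h, diag(h, 1))`. -/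
theorem tilde_embeddings_and_coset_matching
    (F₀ F : Type*) [Field F₀] [Field F] [Algebra F₀ F]
    [NumberField F₀] [NumberField F]
    -- `F₀` is totally real
    (htotreal : ∀ (φ : F₀ →+* ℂ) (x : F₀), (φ x).im = 0)
    -- `F` is totally imaginary
    (htotimag : ∀ φ : F →+* ℂ, ∃ x : F, (φ x).im ≠ 0)
    -- `F` is a quadratic extension of `F₀`
    (hquad : Module.finrank F₀ F = 2)
    -- `σ` is the nontrivial `F₀`-automorphism of `F/F₀` (an involution)
    (σ : F ≃ₐ[F₀] F) (hσ : σ ≠ AlgEquiv.refl) (hσ2 : ∀ x : F, σ (σ x) = x)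
    (m : ℕ) (Jb : Matrix (Fin m) (Fin m) F)
    (hJbherm : conjTr (⇑σ) Jb = Jb) (hJbdet : Jb.det ≠ 0)
    (c₀ : F₀) (hc₀ : c₀ ≠ 0)
    (J : Matrix (Fin m ⊕ Unit) (Fin m ⊕ Unit) F)
    (hJdef : J = Matrix.fromBlocks Jb 0 0 (Matrix.of fun _ _ => algebraMap F₀ F c₀)) :
    -- (i) injective group homomorphisms `H̃ → G̃` and `H → G`
    (Set.MapsTo embTilde (TildePoints (⇑σ) Jb) (TildePoints (⇑σ) J) ∧
      Set.InjOn embTilde (TildePoints (⇑σ) Jb) ∧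
      (∀ p ∈ TildePoints (⇑σ) Jb, ∀ q ∈ TildePoints (⇑σ) Jb,
        embTilde (p * q) = embTilde p * embTilde q) ∧
      Set.MapsTo embU (UnitaryPoints (⇑σ) Jb) (UnitaryPoints (⇑σ) J) ∧
      Set.InjOn embU (UnitaryPoints (⇑σ) Jb) ∧
      (∀ h ∈ UnitaryPoints (⇑σ) Jb, ∀ h' ∈ UnitaryPoints (⇑σ) Jb,
        embU (h * h') = embU h * embU h')) ∧
    -- (ii) `(z, g) ↦ z⁻¹ • g` induces a bijection `G̃/H̃ ≅ G/H`
    ((∀ p ∈ TildePoints (⇑σ) J, projU p ∈ UnitaryPoints (⇑σ) J) ∧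
      (∀ g ∈ UnitaryPoints (⇑σ) J, ∃ p ∈ TildePoints (⇑σ) J, projU p = g) ∧
      (∀ p ∈ TildePoints (⇑σ) J, ∀ p' ∈ TildePoints (⇑σ) J,
        ((∃ q ∈ TildePoints (⇑σ) Jb, p' = p * embTilde q) ↔
          (∃ h ∈ UnitaryPoints (⇑σ) Jb, projU p' = projU p * embU h)))) ∧
    -- (iii) `(z, h, g) ↦ (z⁻¹ • h, z⁻¹ • g)` induces a bijection `H̃\G̃_W/H̃ ≅ H\(H×G)/H`
    ((∀ q ∈ TildePoints (⇑σ) Jb, embTildeHG q ∈ TildeHGPoints (⇑σ) Jb J) ∧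
      (∀ p ∈ TildeHGPoints (⇑σ) Jb J,
        projHG p ∈ UnitaryPoints (⇑σ) Jb ×ˢ UnitaryPoints (⇑σ) J) ∧
      (∀ x ∈ UnitaryPoints (⇑σ) Jb ×ˢ UnitaryPoints (⇑σ) J,
        ∃ p ∈ TildeHGPoints (⇑σ) Jb J, projHG p = x) ∧
      (∀ p ∈ TildeHGPoints (⇑σ) Jb J, ∀ p' ∈ TildeHGPoints (⇑σ) Jb J,
        ((∃ q ∈ TildePoints (⇑σ) Jb, ∃ q' ∈ TildePoints (⇑σ) Jb,
            p' = embTildeHG q * p * embTildeHG q') ↔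
          (∃ h ∈ UnitaryPoints (⇑σ) Jb, ∃ h' ∈ UnitaryPoints (⇑σ) Jb,
            projHG p' = embHtoHG h * projHG p * embHtoHG h')))) :=
  tilde_embeddings_and_coset_matching_general F₀ F σ m Jb c₀ J hJdef
end

section
/- Algebraic form of Lemma B.1 (triviality of the banal local model): let R be a commutative ring, n ≥ 1, and let Q_A, Q_B ∈ R[T] be monic polynomials, with d := deg Q_A. Let M := (R[T]/(Q_A·Q_B))^n as an R[T]-module, and let P be an R[T]-module which is finite and free as an R-module, together with a surjective R[T]-linear map q : M → P. Assume: (Eisenstein condition) Q_A(t)·P = 0, where t denotes the R-linear action of T on P; and (Kottwitz condition) the characteristic polynomial of the R-linear endomorphism t of P equals Q_A^n. Then ker q = Q_A·M; equivalently, the induced surjection (R[T]/(Q_A))^n → P is an isomorphism of R[T]-modules. In particular, the quotient P is uniquely determined by these two conditions. -/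
/-!
Since `Q_A` kills `P`, the surjection `q` factors through `(R[T]/(Q_A))^n`, a free `R`-module of
rank `n · deg Q_A`. The Kottwitz condition says that `P` is free of the same rank, so the induced
surjection `(R[T]/(Q_A))^n → P` is an isomorphism: over a commutative ring a surjection between
finite free modules of equal rank is injective.
-/

open Polynomial

/-- The `R`-linear endomorphism `t` of an `R[T]`-module `P` given by the action of the
variable `T`. -/
noncomputable def tAction (R : Type*) [CommRing R] (P : Type*) [AddCommGroup P]
    [Module R P] [Module (Polynomial R) P] [IsScalarTower R (Polynomial R) P] :
    P →ₗ[R] P where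
  toFun p := (X : Polynomial R) • p
  map_add' p p' := smul_add _ p p'
  map_smul' r p := (smul_comm r (X : Polynomial R) p).symm

theorem Submodule.factor_span_singleton_eq_zero_iff {A : Type*} [CommRing A] {a : A}
    {I : Ideal A} (h : I ≤ Ideal.span {a}) (x : A ⧸ I) :
    Submodule.factor h x = 0 ↔ ∃ y, x = a • y := by
  constructor
  · obtain ⟨g, rfl⟩ := Submodule.Quotient.mk_surjective _ x
    intro hg
    obtain ⟨y, rfl⟩ := Ideal.mem_span_singleton'.mp ((Submodule.Quotient.mk_eq_zero _).mp hg)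
    exact ⟨Submodule.Quotient.mk y, by rw [← Submodule.Quotient.mk_smul, smul_eq_mul, mul_comm]⟩
  · rintro ⟨y, rfl⟩
    obtain ⟨y, rfl⟩ := Submodule.Quotient.mk_surjective _ y
    rw [map_smul, ← Submodule.mkQ_apply, Submodule.factor_mk, Submodule.mkQ_apply,
      ← Submodule.Quotient.mk_smul, Submodule.Quotient.mk_eq_zero]
    exact Ideal.mem_span_singleton.mpr (dvd_mul_right a y)

theorem Submodule.factor_span_singleton_compLeft_eq_zero_iff {A ι : Type*} [CommRing A] {a : A}
    {I : Ideal A} (h : I ≤ Ideal.span {a}) (m : ι → A ⧸ I) :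
    (Submodule.factor h).compLeft ι m = 0 ↔ ∃ m', m = a • m' := by
  simp only [funext_iff, LinearMap.compLeft_apply, Function.comp_apply, Pi.zero_apply,
    Submodule.factor_span_singleton_eq_zero_iff, Pi.smul_apply]
  exact Classical.skolem

theorem LinearMap.ker_eq_of_ker_le_of_finrank_eq {R M N P : Type*} [CommRing R]
    [StrongRankCondition R] [AddCommGroup M] [Module R M] [AddCommGroup N] [Module R N]
    [Module.Free R N] [Module.Finite R N] [AddCommGroup P] [Module R P] [Module.Free R P]
    [Module.Finite R P] {f : M →ₗ[R] N} (hf : Function.Surjective f) {q : M →ₗ[R] P}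
    (hq : Function.Surjective q) (hle : ker f ≤ ker q)
    (hrank : Module.finrank R N = Module.finrank R P) : ker q = ker f := by
  let qbar : N →ₗ[R] P := (ker f).liftQ q hle ∘ₗ (f.quotKerEquivOfSurjective hf).symm.toLinearMap
  have hqbar : ∀ m, qbar (f m) = q m := fun m => by
    simp only [qbar, coe_comp, LinearEquiv.coe_coe, Function.comp_apply,
      (LinearEquiv.symm_apply_eq _).mpr (f.quotKerEquivOfSurjective_apply_mk hf m).symm,
      Submodule.liftQ_apply]
  have hqbar_surj : Function.Surjective qbar := fun p => by
    obtain ⟨m, rfl⟩ := hq p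
    exact ⟨f m, hqbar m⟩
  have hqbar_inj : Function.Injective qbar :=
    OrzechProperty.injective_of_surjective_of_injective
      (LinearEquiv.ofFinrankEq N P hrank).toLinearMap qbar (LinearEquiv.injective _) hqbar_surj
  refine le_antisymm (fun m hm => ?_) hle
  rw [mem_ker, ← hqbar, ← map_zero qbar] at hm
  exact mem_ker.mpr (hqbar_inj hm)

theorem banal_local_model_trivial_general
    (R : Type*) [CommRing R] (n : ℕ)
    (Qa Qb : Polynomial R) (hQa : Qa.Monic)
    (P : Type*) [AddCommGroup P] [Module R P] [Module (Polynomial R) P]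
    [IsScalarTower R (Polynomial R) P]
    -- `P` is finite and free as an `R`-module
    [Module.Finite R P] [Module.Free R P]
    -- the surjection `q : M = (R[T]/(Q_A·Q_B))^n → P`
    (q : (Fin n → Polynomial R ⧸ Ideal.span {Qa * Qb}) →ₗ[Polynomial R] P)
    (hq : Function.Surjective q)
    -- the Eisenstein condition
    (hEis : ∀ p : P, Qa • p = 0)
    -- the Kottwitz condition
    (hKott : LinearMap.charpoly (tAction R P) = Qa ^ n) :
    ∀ m : Fin n → Polynomial R ⧸ Ideal.span {Qa * Qb},
      q m = 0 ↔ ∃ m' : Fin n → Polynomial R ⧸ Ideal.span {Qa * Qb}, m = Qa • m' := by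
  rcases subsingleton_or_nontrivial R with _ | _
  · have := Module.subsingleton R P
    have := Module.subsingleton R R[X]
    exact fun m => iff_of_true (Subsingleton.elim _ _) ⟨0, Subsingleton.elim _ _⟩
  have hdvd : Ideal.span {Qa * Qb} ≤ Ideal.span {Qa} :=
    Ideal.span_singleton_le_span_singleton.mpr (dvd_mul_right Qa Qb)
  let π := (Submodule.factor hdvd).compLeft (Fin n)
  have hπ : ∀ m, π m = 0 ↔ ∃ m', m = Qa • m' :=
    Submodule.factor_span_singleton_compLeft_eq_zero_iff hdvd
  have hle : LinearMap.ker π ≤ LinearMap.ker q := fun m hm => by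
    obtain ⟨m', rfl⟩ := (hπ m).mp hm
    rw [LinearMap.mem_ker, map_smul, hEis]
  have := hQa.free_quotient
  have := hQa.finite_quotient
  have hrank : Module.finrank R (Fin n → R[X] ⧸ Ideal.span {Qa}) = Module.finrank R P := by
    rw [Module.finrank_pi_fintype, ← LinearMap.charpoly_natDegree (tAction R P), hKott,
      hQa.natDegree_pow, finrank_quotient_span_eq_natDegree' hQa]
    simp
  have hker := LinearMap.ker_eq_of_ker_le_of_finrank_eq
    (f := π.restrictScalars R) (Submodule.factor_surjective hdvd).comp_left
    (q := q.restrictScalars R) hq hle hrank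
  exact fun m => (SetLike.ext_iff.mp hker m).trans (hπ m)

/-- algebraic form of Lemma B.1 of the paper: triviality of the banal
local model. Let `R` be a commutative ring, `n ≥ 1`, and let `Q_A, Q_B ∈ R[T]` be monic
polynomials. Let `M := (R[T]/(Q_A Q_B))^n` as an `R[T]`-module, and let `P` be an
`R[T]`-module which is finite and free as an `R`-module, together with a surjective
`R[T]`-linear map `q : M → P`. Assume the **Eisenstein condition** `Q_A(t) • P = 0` (where
`t` is the action of `T` on `P`) and the **Kottwitz condition** that the characteristic
polynomial of the `R`-linear endomorphism `t` of `P` equals `Q_A ^ n`. Then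
`ker q = Q_A · M`; in particular the quotient `P` is uniquely determined by these two
conditions. -/
theorem banal_local_model_trivial
    (R : Type*) [CommRing R] (n : ℕ) (hn : 1 ≤ n)
    (Qa Qb : Polynomial R) (hQa : Qa.Monic) (hQb : Qb.Monic)
    (P : Type*) [AddCommGroup P] [Module R P] [Module (Polynomial R) P]
    [IsScalarTower R (Polynomial R) P]
    -- `P` is finite and free as an `R`-module
    [Module.Finite R P] [Module.Free R P]
    -- the surjection `q : M = (R[T]/(Q_A·Q_B))^n → P`
    (q : (Fin n → Polynomial R ⧸ Ideal.span {Qa * Qb}) →ₗ[Polynomial R] P)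
    (hq : Function.Surjective q)
    -- the Eisenstein condition
    (hEis : ∀ p : P, Qa • p = 0)
    -- the Kottwitz condition
    (hKott : LinearMap.charpoly (tAction R P) = Qa ^ n) :
    ∀ m : Fin n → Polynomial R ⧸ Ideal.span {Qa * Qb},
      q m = 0 ↔ ∃ m' : Fin n → Polynomial R ⧸ Ideal.span {Qa * Qb}, m = Qa • m' :=
  banal_local_model_trivial_general R n Qa Qb hQa P q hq hEis hKott
end
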